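/- For any compact metric space X (with Hausdorff distance D on compact sets), the map σ ↦ w_α(σ) is 'upper semicontinuous': if σ_j → σ in U^{ℓ+1}_α, then sup_{x ∈ w_α(σ_j)} d(x, w_α(σ)) → 0. -/

import Mathlib

/-- The closed `α`-neighborhood of the diagonal in `X^n`. -/
def diagNbhd {X : Type*} [MetricSpace X] (α : ℝ) (n : ℕ) :
    Set (Fin n → X) :=
  {x | ∃ t : X, ∀ i, dist (x i) t ≤ α}

/-- The witness set `w_α(σ) = ⋂ᵢ B̄_α(σᵢ)`. -/
def witnessSet {X : Type*} [MetricSpace X] (α : ℝ) {n : ℕ}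
    (σ : Fin n → X) : Set X :=
  ⋂ i, Metric.closedBall (σ i) α

/-!
The graph `{(σ, x) | x ∈ w_α(σ)}` is closed, being cut out by the continuous inequalities
`d(x, σᵢ) ≤ α`. For a set-valued map into a compact space, a closed graph already gives upper
semicontinuity: the parameters `y` for which `F y` meets `{x | ε ≤ d(x, F y₀)}` form the
projection of a closed subset of `Y × X`, which is closed because `X` is compact, and it
does not contain `y₀`.
-/

open Filter Topology Metric

theorem isClosed_setOf_mem_witnessSet {X : Type*} [MetricSpace X] (α : ℝ) (n : ℕ) :
    IsClosed {p : (Fin n → X) × X | p.2 ∈ witnessSet α p.1} := by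
  simp only [witnessSet, Set.mem_iInter, mem_closedBall, Set.ofPred_forall]
  exact isClosed_iInter fun i =>
    isClosed_le (continuous_snd.dist ((continuous_apply i).comp continuous_fst)) continuous_const

section ClosedGraph

variable {X Y : Type*} [PseudoMetricSpace X] [CompactSpace X] [TopologicalSpace Y]
  {F : Y → Set X}

theorem eventually_forall_mem_infDist_lt (hF : IsClosed {p : Y × X | p.2 ∈ F p.1}) (y₀ : Y)
    {ε : ℝ} (hε : 0 < ε) : ∀ᶠ y in 𝓝 y₀, ∀ x ∈ F y, infDist x (F y₀) < ε := by
  set B := Prod.fst '' {p : Y × X | p.2 ∈ F p.1 ∧ ε ≤ infDist p.2 (F y₀)}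
  have hB : IsClosed B := isClosedMap_fst_of_compactSpace _ <|
    hF.inter (isClosed_le continuous_const ((continuous_infDist_pt _).comp continuous_snd))
  have hy₀ : y₀ ∉ B := by
    rintro ⟨⟨y, x⟩, ⟨hx, hεx⟩, rfl⟩
    rw [infDist_zero_of_mem hx] at hεx
    exact hεx.not_gt hε
  filter_upwards [hB.isOpen_compl.mem_nhds hy₀] with y hy x hx
  by_contra! h
  exact hy ⟨(y, x), ⟨hx, h⟩, rfl⟩

theorem tendsto_iSup_infDist_of_isClosed_graph (hF : IsClosed {p : Y × X | p.2 ∈ F p.1})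
    (y₀ : Y) : Tendsto (fun y => ⨆ x ∈ F y, infDist x (F y₀)) (𝓝 y₀) (𝓝 0) := by
  rw [Metric.tendsto_nhds]
  intro ε hε
  filter_upwards [eventually_forall_mem_infDist_lt hF y₀ (half_pos hε)] with y hy
  have hnonneg : 0 ≤ ⨆ x ∈ F y, infDist x (F y₀) :=
    Real.iSup_nonneg fun x => Real.iSup_nonneg fun _ => infDist_nonneg
  have hle : ⨆ x ∈ F y, infDist x (F y₀) ≤ ε / 2 :=
    Real.iSup_le (fun x => Real.iSup_le (fun hx => (hy x hx).le) (half_pos hε).le)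
      (half_pos hε).le
  rw [Real.dist_0_eq_abs, abs_of_nonneg hnonneg]
  linarith

end ClosedGraph

theorem witness_upper_semicontinuous_general
    {X : Type*} [MetricSpace X] [CompactSpace X]
    (α : ℝ) (ℓ : ℕ) (σ : ℕ → Fin (ℓ + 1) → X) (σ₀ : Fin (ℓ + 1) → X)
    (hconv : Filter.Tendsto σ Filter.atTop (nhds σ₀)) :
    Filter.Tendsto
      (fun j => ⨆ x ∈ witnessSet α (σ j), Metric.infDist x (witnessSet α σ₀))
      Filter.atTop (nhds 0) :=
  (tendsto_iSup_infDist_of_isClosed_graph (isClosed_setOf_mem_witnessSet α (ℓ + 1)) σ₀).comp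
    hconv

/-- on any compact metric space the witness map is upper
semicontinuous: if `σ_j → σ₀` in `U^{ℓ+1}_α`, then
`sup_{x ∈ w_α(σ_j)} d(x, w_α(σ₀)) → 0`. -/
theorem witness_upper_semicontinuous
    {X : Type*} [MetricSpace X] [CompactSpace X]
    (α : ℝ) (ℓ : ℕ) (σ : ℕ → Fin (ℓ + 1) → X) (σ₀ : Fin (ℓ + 1) → X)
    (hmem : ∀ j, σ j ∈ diagNbhd α (ℓ + 1)) (h0 : σ₀ ∈ diagNbhd α (ℓ + 1))
    (hconv : Filter.Tendsto σ Filter.atTop (nhds σ₀)) :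
    Filter.Tendsto
      (fun j => ⨆ x ∈ witnessSet α (σ j), Metric.infDist x (witnessSet α σ₀))
      Filter.atTop (nhds 0) :=
  witness_upper_semicontinuous_general α ℓ σ σ₀ hconv
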